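/- For every rational q, the relative orthogonal complement S_q⁺ ⊓ (S_q⁻)ᗮ of S_q⁻ inside S_q⁺ is one-dimensional and is spanned by the vector e_q; equivalently e_q ∈ S_q⁺, e_q is orthogonal to S_q⁻, and S_q⁺ = S_q⁻ ⊔ ℂ·e_q. (Thus every atom of the nest 𝒩₁ is one-dimensional.) -/

import Mathlib

open MeasureTheory

/-- The closed subspace of `L²(ν)` of functions vanishing `ν`-a.e. on the set `s`. -/
noncomputable def vanishOn (ν : Measure ℝ) (s : Set ℝ) : Submodule ℂ (Lp ℂ 2 ν) where
  carrier := {f | (f : ℝ → ℂ) =ᵐ[ν.restrict s] 0}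
  add_mem' := by
    intro f g hf hg
    filter_upwards [hf, hg, ae_restrict_of_ae (Lp.coeFn_add f g)] with x hfx hgx hx
    show (↑↑(f + g) : ℝ → ℂ) x = 0
    rw [hx]
    simp only [Pi.add_apply]
    simp [hfx, hgx]
  zero_mem' := by
    filter_upwards [ae_restrict_of_ae (Lp.coeFn_zero ℂ 2 ν)] with x hx
    show (↑↑(0 : Lp ℂ 2 ν) : ℝ → ℂ) x = 0
    simpa using hx
  smul_mem' := by
    intro c f hf
    filter_upwards [hf, ae_restrict_of_ae (Lp.coeFn_smul c f)] with x hfx hx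
    show (↑↑(c • f) : ℝ → ℂ) x = 0
    rw [hx]
    simp [hfx]

/-- The measure `μ = ∑_{q ∈ ℚ} δ_q` on the Borel σ-algebra of `ℝ`. -/
noncomputable def mu : Measure ℝ := Measure.sum fun q : ℚ => Measure.dirac (q : ℝ)

lemma mu_singleton_ne_top (x : ℝ) : mu {x} ≠ ⊤ := by
  have h : mu {x} = ∑' q : ℚ, Measure.dirac (q : ℝ) {x} :=
    Measure.sum_apply _ (measurableSet_singleton x)
  rw [h]
  by_cases hx : ∃ q : ℚ, (q : ℝ) = x
  · obtain ⟨q₀, hq₀⟩ := hx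
    have hs : ∀ q : ℚ, q ≠ q₀ → Measure.dirac (q : ℝ) {x} = 0 := by
      intro q hq
      rw [Measure.dirac_apply]
      have : (q : ℝ) ≠ x := by
        intro h'
        exact hq (by exact_mod_cast hq₀ ▸ h')
      simp [Set.indicator, this]
    rw [tsum_eq_single q₀ hs, Measure.dirac_apply]
    simp [Set.indicator, hq₀]
  · have hs : ∀ q : ℚ, Measure.dirac (q : ℝ) {x} = 0 := by
      intro q
      rw [Measure.dirac_apply]
      have : (q : ℝ) ≠ x := fun h' => hx ⟨q, h'⟩
      simp [Set.indicator, this]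
    simp [hs]

/-- `e q` is the indicator function of the singleton `{q}` as an element of `H = L²(ℝ, μ)`. -/
noncomputable def e (q : ℚ) : Lp ℂ 2 mu :=
  indicatorConstLp 2 (measurableSet_singleton (q : ℝ)) (mu_singleton_ne_top _) (1 : ℂ)

/-- The subspace `S_t⁺ = {f ∈ L²(μ) : f = 0 μ-a.e. on (t, ∞)}`. -/
noncomputable def Splus (t : ℝ) : Submodule ℂ (Lp ℂ 2 mu) := vanishOn mu (Set.Ioi t)

/-- The subspace `S_t⁻ = {f ∈ L²(μ) : f = 0 μ-a.e. on [t, ∞)}`. -/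
noncomputable def Sminus (t : ℝ) : Submodule ℂ (Lp ℂ 2 mu) := vanishOn mu (Set.Ici t)

/-- The subspace `N_t = {f ∈ L²(λ) : f = 0 λ-a.e. on (t, ∞)}` of `K = L²(ℝ, λ)`,
where `λ` is Lebesgue measure. -/
noncomputable def Nt (t : ℝ) : Submodule ℂ (Lp ℂ 2 (volume : Measure ℝ)) :=
  vanishOn volume (Set.Ioi t)

open Filter Submodule

/-! Every element of `L²(μ)` has a well-defined value at each rational, since `μ`-a.e. means
"at every rational". Subtracting `f q • e q` from `f ∈ S_q⁺` lands in `S_q⁻`, so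
`S_q⁺ = S_q⁻ ⊔ ℂ e_q`; as `e_q ⊥ S_q⁻`, the modular law turns this into
`S_q⁺ ⊓ (S_q⁻)ᗮ = ℂ e_q`. -/

theorem inf_orthogonal_eq_span_of_eq_sup {𝕜 E : Type*} [RCLike 𝕜] [NormedAddCommGroup E]
    [InnerProductSpace 𝕜 E] {K L : Submodule 𝕜 E} {v : E} (hv : v ∈ Kᗮ)
    (hL : L = K ⊔ span 𝕜 {v}) : L ⊓ Kᗮ = span 𝕜 {v} := by
  rw [hL, sup_comm, sup_inf_assoc_of_le _ ((span_singleton_le_iff_mem _ _).2 hv),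
    inf_orthogonal_eq_bot, sup_bot_eq]

section vanishOn

variable {ν : Measure ℝ} {s t : Set ℝ}

theorem vanishOn_anti (hst : s ⊆ t) : vanishOn ν t ≤ vanishOn ν s :=
  fun _ hf => ae_restrict_of_ae_restrict_of_subset hst hf

theorem indicatorConstLp_mem_vanishOn (hs : MeasurableSet s) (hνs : ν s ≠ ⊤) (c : ℂ)
    (ht : MeasurableSet t) (hst : Disjoint s t) : indicatorConstLp 2 hs hνs c ∈ vanishOn ν t := by
  filter_upwards [ae_restrict_of_ae (indicatorConstLp_coeFn (hs := hs) (hμs := hνs) (c := c)),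
    ae_restrict_mem ht] with x hx hxt
  rw [hx, Set.indicator_of_notMem (hst.notMem_of_mem_right hxt)]
  rfl

theorem indicatorConstLp_mem_orthogonal_vanishOn (hs : MeasurableSet s) (hνs : ν s ≠ ⊤) (c : ℂ)
    (hst : s ⊆ t) : indicatorConstLp 2 hs hνs c ∈ (vanishOn ν t)ᗮ := by
  refine (mem_orthogonal' _ _).2 fun f hf => ?_
  have hfs : (f : ℝ → ℂ) =ᵐ[ν.restrict s] 0 := ae_restrict_of_ae_restrict_of_subset hst hf
  rw [L2.inner_indicatorConstLp_eq_setIntegral_inner ℂ, integral_congr_ae (hfs.mono fun x hx => by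
    rw [hx, Pi.zero_apply, inner_zero_right])]
  exact integral_zero _ _

end vanishOn

theorem mu_rat_singleton (r : ℚ) : mu {(r : ℝ)} = 1 := by
  rw [mu, Measure.sum_apply _ (measurableSet_singleton _), tsum_eq_single r fun q hq => by
    simp [Rat.cast_injective.ne hq]]
  simp

theorem ae_mu_iff {p : ℝ → Prop} : (∀ᵐ x ∂mu, p x) ↔ ∀ r : ℚ, p r := by
  refine ⟨fun h r => ?_, fun h => ?_⟩
  · by_contra hr
    have : mu {(r : ℝ)} = 0 := measure_mono_null (by simpa using hr) h
    simp [mu_rat_singleton] at this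
  · refine measure_mono_null (t := (Set.range ((↑) : ℚ → ℝ))ᶜ) ?_ ?_
    · rintro x hx ⟨r, rfl⟩
      exact hx (h r)
    · rw [mu, Measure.sum_apply _ (Set.countable_range _).measurableSet.compl]
      simp

theorem mem_vanishOn_mu_iff {s : Set ℝ} (hs : MeasurableSet s) (f : Lp ℂ 2 mu) :
    f ∈ vanishOn mu s ↔ ∀ r : ℚ, (r : ℝ) ∈ s → f r = 0 :=
  (ae_restrict_iff' hs).trans ae_mu_iff

theorem e_apply (q r : ℚ) : e q r = if r = q then 1 else 0 := by
  rw [e, ae_mu_iff.1 indicatorConstLp_coeFn r]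
  simp [Set.indicator, Rat.cast_inj]

theorem norm_e (q : ℚ) : ‖e q‖ = 1 := by
  rw [e, norm_indicatorConstLp two_ne_zero ENNReal.ofNat_ne_top, measureReal_def,
    mu_rat_singleton]
  simp

theorem e_mem_orthogonal_Sminus (q : ℚ) : e q ∈ (Sminus q)ᗮ :=
  indicatorConstLp_mem_orthogonal_vanishOn _ _ _ (Set.singleton_subset_iff.2 Set.self_mem_Ici)

theorem e_mem_Splus (q : ℚ) : e q ∈ Splus q :=
  indicatorConstLp_mem_vanishOn _ _ _ measurableSet_Ioi (by simp)

theorem sub_smul_e_mem_Sminus {q : ℚ} {f : Lp ℂ 2 mu} (hf : f ∈ Splus q) :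
    f - f q • e q ∈ Sminus q := by
  have hsub := ae_mu_iff.1 <| (Lp.coeFn_sub f (f q • e q)).trans <|
    (EventuallyEq.refl _ _).sub (Lp.coeFn_smul (f q) (e q))
  refine (mem_vanishOn_mu_iff measurableSet_Ici _).2 fun r hr => ?_
  rw [hsub r]
  rcases (Set.mem_Ici.1 hr).eq_or_lt with h | h
  · obtain rfl : q = r := by exact_mod_cast h
    simp [e_apply]
  · have hqr : r ≠ q := by exact_mod_cast h.ne'
    simp [e_apply, hqr, (mem_vanishOn_mu_iff measurableSet_Ioi f).1 hf r h]

theorem Splus_eq_Sminus_sup_span (q : ℚ) : Splus q = Sminus q ⊔ span ℂ {e q} := by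
  refine le_antisymm (fun f hf => ?_) (sup_le (vanishOn_anti Set.Ioi_subset_Ici_self) ?_)
  · exact mem_sup.2 ⟨_, sub_smul_e_mem_Sminus hf, _, smul_mem _ _ (mem_span_singleton_self _),
      sub_add_cancel _ _⟩
  · exact (span_singleton_le_iff_mem _ _).2 (e_mem_Splus q)

/-- For every rational `q`, the relative orthogonal complement `S_q⁺ ⊓ (S_q⁻)ᗮ`
of `S_q⁻` inside `S_q⁺` is one-dimensional, spanned by `e_q`: one has `e_q ≠ 0`,
`e_q ∈ S_q⁺`, `e_q ⊥ S_q⁻`, `S_q⁺ ⊓ (S_q⁻)ᗮ = ℂ·e_q`, and `S_q⁺ = S_q⁻ ⊔ ℂ·e_q`. -/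
theorem atom_of_nest_one (q : ℚ) :
    e q ≠ 0 ∧
    e q ∈ Splus (q : ℝ) ∧
    e q ∈ (Sminus (q : ℝ))ᗮ ∧
    Splus (q : ℝ) ⊓ (Sminus (q : ℝ))ᗮ = Submodule.span ℂ {e q} ∧
    Splus (q : ℝ) = Sminus (q : ℝ) ⊔ Submodule.span ℂ {e q} ∧
    Module.finrank ℂ ↥(Splus (q : ℝ) ⊓ (Sminus (q : ℝ))ᗮ) = 1 := by
  have hne : e q ≠ 0 := norm_ne_zero_iff.1 (by simp [norm_e])
  have hatom := inf_orthogonal_eq_span_of_eq_sup (e_mem_orthogonal_Sminus q)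
    (Splus_eq_Sminus_sup_span q)
  refine ⟨hne, e_mem_Splus q, e_mem_orthogonal_Sminus q, hatom, Splus_eq_Sminus_sup_span q, ?_⟩
  rw [hatom]
  exact finrank_span_singleton hne
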